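/- arXiv:2002.12607 — 7 statements merged into one kernel-verified Lean document; each statement's English description precedes it below -/
import Mathlib

section
/- Let S ⊆ {1,…,m} and let 0 ≤ s ≤ |S|. If rank(F^S) = |S| − s, then every subset of S of cardinality |S| − s + 1 is critical, and there exists a subset of S of cardinality |S| − s that is non-critical. -/
/-!
For `H` of full column rank, `Hᴴ H` is invertible and `P = H (Hᴴ H)⁻¹ Hᴴ` is the projection onto
`range H`, so `ker F = range H` for `F = P - 1`. A set `T` is critical exactly when some nonzero
`H x` vanishes outside `T`, i.e. when some nonzero vector of `ker F` is supported in `T`, i.e. when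
the columns of `F` indexed by `T` are linearly dependent: `rank F^T < |T|`. Monotonicity of
`rank F^T` in `T` gives the first claim; a maximal independent set of columns of `F^S` gives the
second.
-/

open Matrix

/-- The verification matrix `F := H (Hᴴ H)⁻¹ Hᴴ - Id`. -/
noncomputable def verif {m n : ℕ} (H : Matrix (Fin m) (Fin n) ℂ) :
    Matrix (Fin m) (Fin m) ℂ :=
  H * (Hᴴ * H)⁻¹ * Hᴴ - 1

/-- A set `S` of measurement (row) indices is critical if deleting the rows of `H`
with indices in `S` leaves a matrix of rank `< n`. -/
def IsCritical {m n : ℕ} (H : Matrix (Fin m) (Fin n) ℂ) (S : Finset (Fin m)) : Prop :=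
  (H.submatrix (fun i : {i : Fin m // i ∉ S} => (i : Fin m)) id).rank < n

/-- `F^S`: the submatrix of `F` formed by the columns with indices in `S`. -/
def colSub {m : ℕ} (F : Matrix (Fin m) (Fin m) ℂ) (S : Finset (Fin m)) :
    Matrix (Fin m) {j : Fin m // j ∈ S} ℂ :=
  F.submatrix id (fun j => (j : Fin m))

open Module Submodule

namespace Matrix

variable {K κ ι : Type*} [Field K]

section

variable [Fintype ι]

theorem rank_lt_card_width_iff (A : Matrix κ ι K) :
    A.rank < Fintype.card ι ↔ ∃ c ≠ 0, A *ᵥ c = 0 := by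
  have hdim := LinearMap.finrank_range_add_finrank_ker A.mulVecLin
  rw [finrank_fintype_fun_eq_card] at hdim
  have hker : LinearMap.ker A.mulVecLin ≠ ⊥ ↔ ∃ c ≠ 0, A *ᵥ c = 0 := by
    simp [ker_mulVecLin_eq_bot_iff, and_comm]
  rw [← hker, Ne, ← finrank_eq_zero (R := K)]
  change finrank K (LinearMap.range A.mulVecLin) < _ ↔ _
  omega

theorem submatrix_col_mulVec_restrict (A : Matrix κ ι K) {T : Finset ι} {v : ι → K}
    (hv : ∀ i ∉ T, v i = 0) :
    A.submatrix id ((↑) : T → ι) *ᵥ (fun i => v i) = A *ᵥ v := by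
  ext k
  simp only [mulVec, dotProduct, submatrix_apply, id_eq]
  rw [Finset.sum_coe_sort T (fun i => A k i * v i)]
  exact Finset.sum_subset (Finset.subset_univ T) (fun i _ hi => by simp [hv i hi])

theorem exists_submatrix_col_mulVec_eq_zero_iff (A : Matrix κ ι K) (T : Finset ι) :
    (∃ c ≠ 0, A.submatrix id ((↑) : T → ι) *ᵥ c = 0) ↔
      ∃ v ≠ 0, (∀ i ∉ T, v i = 0) ∧ A *ᵥ v = 0 := by
  classical
  constructor
  · rintro ⟨c, hc0, hc⟩
    set v : ι → K := fun i => if h : i ∈ T then c ⟨i, h⟩ else 0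
    have hvT : ∀ i ∉ T, v i = 0 := fun i hi => dif_neg hi
    have hcv : (fun i : T => v i) = c := funext fun i => dif_pos i.2
    refine ⟨v, fun hv => hc0 ?_, hvT, ?_⟩
    · rw [← hcv, hv]; rfl
    · rw [← submatrix_col_mulVec_restrict A hvT, hcv, hc]
  · rintro ⟨v, hv0, hvT, hv⟩
    refine ⟨fun i => v i, fun h0 => hv0 (funext fun i => ?_), ?_⟩
    · by_cases hi : i ∈ T
      · exact congrFun h0 ⟨i, hi⟩
      · exact hvT i hi
    · rw [submatrix_col_mulVec_restrict A hvT, hv]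

end

theorem rank_lt_width_iff {n : ℕ} (A : Matrix κ (Fin n) K) :
    A.rank < n ↔ ∃ c ≠ 0, A *ᵥ c = 0 := by
  simpa using rank_lt_card_width_iff A

theorem rank_submatrix_col_le_of_subset (A : Matrix κ ι K) {T S : Finset ι} (hTS : T ⊆ S) :
    (A.submatrix id ((↑) : T → ι)).rank ≤ (A.submatrix id ((↑) : S → ι)).rank :=
  (A.submatrix id ((↑) : S → ι)).rank_submatrix_le id (fun j : T => (⟨j, hTS j.2⟩ : S))

theorem rank_submatrix_col_eq_finrank_span (A : Matrix κ ι K) (T : Finset ι) :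
    (A.submatrix id ((↑) : T → ι)).rank = finrank K (span K (A.col '' T)) := by
  rw [rank_eq_finrank_span_cols, Set.image_eq_range]
  rfl

theorem exists_subset_card_eq_rank_submatrix_col (A : Matrix κ ι K) (S : Finset ι) :
    ∃ T ⊆ S, T.card = (A.submatrix id ((↑) : S → ι)).rank ∧
      (A.submatrix id ((↑) : T → ι)).rank = T.card := by
  obtain ⟨b, hbS, -, hspan, hli⟩ :=
    exists_linearIndepOn_extension (K := K) (v := A.col) (linearIndepOn_empty K _)
      (Set.empty_subset (S : Set ι))
  have := (S.finite_toSet.subset hbS).fintype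
  have hcard : finrank K (span K (A.col '' b)) = b.toFinset.card := by
    rw [Set.image_eq_range, finrank_span_eq_card hli, Set.toFinset_card]
  refine ⟨b.toFinset, by simpa using hbS, ?_, ?_⟩
  · rw [rank_submatrix_col_eq_finrank_span, ← hcard,
      le_antisymm (span_le.mpr hspan) (span_mono (Set.image_mono hbS))]
  · rw [rank_submatrix_col_eq_finrank_span, Set.coe_toFinset, hcard]

open ComplexOrder in
theorem isUnit_det_conjTranspose_mul_self {m n : Type*} [Fintype m] [Fintype n] [DecidableEq n]
    {H : Matrix m n ℂ} (hH : H.rank = Fintype.card n) : IsUnit (Hᴴ * H).det := by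
  rw [isUnit_iff_ne_zero, Ne, ← exists_mulVec_eq_zero_iff, ← rank_lt_card_width_iff,
    rank_conjTranspose_mul_self, hH]
  exact lt_irrefl _

end Matrix

theorem verif_mulVec_eq_zero_iff {m n : ℕ} {H : Matrix (Fin m) (Fin n) ℂ} (hH : H.rank = n)
    (v : Fin m → ℂ) : verif H *ᵥ v = 0 ↔ ∃ x, H *ᵥ x = v := by
  have hproj : H * (Hᴴ * H)⁻¹ * Hᴴ * H = H := by
    rw [Matrix.mul_assoc _ Hᴴ, Matrix.mul_assoc, nonsing_inv_mul _
      (isUnit_det_conjTranspose_mul_self (hH.trans (Fintype.card_fin n).symm)), Matrix.mul_one]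
  simp only [verif, sub_mulVec, one_mulVec, sub_eq_zero]
  constructor
  · intro h
    exact ⟨((Hᴴ * H)⁻¹ * Hᴴ) *ᵥ v, by rw [mulVec_mulVec, ← Matrix.mul_assoc, h]⟩
  · rintro ⟨x, rfl⟩
    rw [mulVec_mulVec, hproj]

theorem isCritical_iff_exists_mulVec_vanishing_off {m n : ℕ} (H : Matrix (Fin m) (Fin n) ℂ)
    (T : Finset (Fin m)) :
    IsCritical H T ↔ ∃ x ≠ 0, ∀ i ∉ T, (H *ᵥ x) i = 0 := by
  rw [IsCritical, rank_lt_width_iff]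
  simp only [funext_iff, Subtype.forall]
  rfl

theorem isCritical_iff_rank_colSub_verif_lt {m n : ℕ} {H : Matrix (Fin m) (Fin n) ℂ}
    (hH : H.rank = n) (T : Finset (Fin m)) :
    IsCritical H T ↔ (colSub (verif H) T).rank < T.card := by
  have hinj (x : Fin n → ℂ) (hx : H *ᵥ x = 0) : x = 0 :=
    by_contra fun hx0 => ((rank_lt_width_iff H).mpr ⟨x, hx0, hx⟩).ne hH
  rw [isCritical_iff_exists_mulVec_vanishing_off, ← Fintype.card_coe T, colSub,
    rank_lt_card_width_iff, exists_submatrix_col_mulVec_eq_zero_iff]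
  constructor
  · rintro ⟨x, hx0, hxT⟩
    exact ⟨H *ᵥ x, fun h => hx0 (hinj x h), hxT, (verif_mulVec_eq_zero_iff hH _).mpr ⟨x, rfl⟩⟩
  · rintro ⟨v, hv0, hvT, hv⟩
    obtain ⟨x, rfl⟩ := (verif_mulVec_eq_zero_iff hH v).mp hv
    exact ⟨x, fun hx => hv0 (by rw [hx, mulVec_zero]), hvT⟩

theorem stmt1_general {m n : ℕ} (H : Matrix (Fin m) (Fin n) ℂ) (hH : H.rank = n)
    (S : Finset (Fin m)) (s : ℕ)
    (hrank : (colSub (verif H) S).rank = S.card - s) :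
    (∀ T ⊆ S, T.card = S.card - s + 1 → IsCritical H T) ∧
      (∃ T ⊆ S, T.card = S.card - s ∧ ¬ IsCritical H T) := by
  constructor
  · intro T hTS hT
    rw [isCritical_iff_rank_colSub_verif_lt hH]
    have hle : (colSub (verif H) T).rank ≤ (colSub (verif H) S).rank :=
      rank_submatrix_col_le_of_subset (verif H) hTS
    omega
  · obtain ⟨T, hTS, hTcard, hTrank⟩ : ∃ T ⊆ S, T.card = (colSub (verif H) S).rank ∧
        (colSub (verif H) T).rank = T.card :=
      exists_subset_card_eq_rank_submatrix_col (verif H) S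
    refine ⟨T, hTS, hTcard.trans hrank, ?_⟩
    rw [isCritical_iff_rank_colSub_verif_lt hH, hTrank]
    exact lt_irrefl _

/-- If `rank(F^S) = |S| - s`, then every subset of `S` of cardinality `|S| - s + 1` is
critical, and some subset of cardinality `|S| - s` is non-critical. -/
theorem stmt1 {m n : ℕ} (H : Matrix (Fin m) (Fin n) ℂ) (hH : H.rank = n)
    (S : Finset (Fin m)) (s : ℕ) (hs : s ≤ S.card)
    (hrank : (colSub (verif H) S).rank = S.card - s) :
    (∀ T ⊆ S, T.card = S.card - s + 1 → IsCritical H T) ∧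
      (∃ T ⊆ S, T.card = S.card - s ∧ ¬ IsCritical H T) :=
  stmt1_general H hH S s hrank
end

section
/- Let S ⊆ {1,…,m} with |S| ≥ 2, let z ∈ ℂ^m, and for u ∈ ℂ with |u| = 1 and u ≠ 1 let z^a ∈ ℂ^m be the attacked vector defined by z^a_i = u·z_i for i ∈ S and z^a_i = z_i for i ∉ S. Then F z^a = F z holds for some such u (equivalently, for every such u) if and only if F^S z^S = 0, i.e., if and only if z^S lies in the null space of F^S. -/
open Matrix

/-! The attack adds `(u - 1) z^S` (extended by zero) to `z`, so by linearity it changes the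
residual `F z` by `(u - 1) F^S z^S`; as `u ≠ 1` this vanishes iff `F^S z^S = 0`, a condition
independent of `u`. Unit-modulus values `u ≠ 1` exist (e.g. `u = -1`), so "for some `u`" and
"for every `u`" agree. -/

section AttackedMulVec

variable {ι R : Type*} [Fintype ι] [DecidableEq ι] [CommRing R]

theorem mulVec_ite_mem_eq_submatrix_mulVec (F : Matrix ι ι R) (S : Finset ι) (z : ι → R) :
    F *ᵥ (fun i => if i ∈ S then z i else 0) = F.submatrix id ((↑) : S → ι) *ᵥ fun j => z j := by
  ext i
  simp only [mulVec, dotProduct, submatrix_apply, id, mul_ite, mul_zero]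
  rw [Finset.sum_ite_mem, Finset.univ_inter, Finset.sum_coe_sort S (fun j => F i j * z j)]

theorem mulVec_ite_mem_mul (F : Matrix ι ι R) (S : Finset ι) (z : ι → R) (u : R) :
    F *ᵥ (fun i => if i ∈ S then u * z i else z i) =
      F *ᵥ z + (u - 1) • (F.submatrix id ((↑) : S → ι) *ᵥ fun j => z j) := by
  have hsplit : (fun i => if i ∈ S then u * z i else z i) =
      z + (u - 1) • fun i => if i ∈ S then z i else 0 := by
    ext i
    by_cases hi : i ∈ S <;> simp [hi]
    ring
  rw [hsplit, mulVec_add, mulVec_smul, mulVec_ite_mem_eq_submatrix_mulVec]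

theorem mulVec_ite_mem_mul_eq_iff [IsDomain R] (F : Matrix ι ι R) (S : Finset ι) (z : ι → R)
    {u : R} (hu : u ≠ 1) :
    F *ᵥ (fun i => if i ∈ S then u * z i else z i) = F *ᵥ z ↔
      F.submatrix id ((↑) : S → ι) *ᵥ (fun j => z j) = 0 := by
  rw [mulVec_ite_mem_mul, add_eq_left, smul_eq_zero, sub_eq_zero, or_iff_right hu]

end AttackedMulVec

theorem stmt5_general {m n : ℕ} (H : Matrix (Fin m) (Fin n) ℂ)
    (S : Finset (Fin m)) (z : Fin m → ℂ) :
    ((∃ u : ℂ, ‖u‖ = 1 ∧ u ≠ 1 ∧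
        (verif H).mulVec (fun i => if i ∈ S then u * z i else z i) =
          (verif H).mulVec z) ↔
      (colSub (verif H) S).mulVec (fun j => z j.val) = 0) ∧
    ((∀ u : ℂ, ‖u‖ = 1 → u ≠ 1 →
        (verif H).mulVec (fun i => if i ∈ S then u * z i else z i) =
          (verif H).mulVec z) ↔
      (colSub (verif H) S).mulVec (fun j => z j.val) = 0) := by
  have key (u : ℂ) (hu : u ≠ 1) :
      (verif H).mulVec (fun i => if i ∈ S then u * z i else z i) = (verif H).mulVec z ↔
        (colSub (verif H) S).mulVec (fun j => z j.val) = 0 :=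
    mulVec_ite_mem_mul_eq_iff (verif H) S z hu
  have norm_neg_one : ‖(-1 : ℂ)‖ = 1 := by simp
  have neg_one_ne_one : (-1 : ℂ) ≠ 1 := by norm_num
  exact ⟨⟨fun ⟨u, _, hu, h⟩ => (key u hu).mp h,
      fun h => ⟨-1, norm_neg_one, neg_one_ne_one, (key _ neg_one_ne_one).mpr h⟩⟩,
    ⟨fun h => (key _ neg_one_ne_one).mp (h _ norm_neg_one neg_one_ne_one),
      fun h u _ hu => (key u hu).mpr h⟩⟩

/-- For a site whose (at least two) phasors have indices in `S`, the residuals are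
unchanged under the attack `z^a_i = u·z_i` (`i ∈ S`), for some unit-modulus `u ≠ 1` —
equivalently for every such `u` — iff `z^S` lies in the null space of `F^S`. -/
theorem stmt5 {m n : ℕ} (H : Matrix (Fin m) (Fin n) ℂ) (hH : H.rank = n)
    (S : Finset (Fin m)) (hS : 2 ≤ S.card) (z : Fin m → ℂ) :
    ((∃ u : ℂ, ‖u‖ = 1 ∧ u ≠ 1 ∧
        (verif H).mulVec (fun i => if i ∈ S then u * z i else z i) =
          (verif H).mulVec z) ↔
      (colSub (verif H) S).mulVec (fun j => z j.val) = 0) ∧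
    ((∀ u : ℂ, ‖u‖ = 1 → u ≠ 1 →
        (verif H).mulVec (fun i => if i ∈ S then u * z i else z i) =
          (verif H).mulVec z) ↔
      (colSub (verif H) S).mulVec (fun j => z j.val) = 0) :=
  stmt5_general H S z
end

section
/- Let S1, S2 ⊆ {1,…,m} be disjoint and nonempty, and suppose rank(F^{[S1,S2]}) = 1, where F^{[S1,S2]} is the m×(|S1|+|S2|) submatrix of F with columns indexed by S1 ∪ S2. Let z ∈ ℂ^m be such that a := F^{S1}z^{S1} ≠ 0 and b := F^{S2}z^{S2} ≠ 0. Then there exists l ∈ ℂ with l ≠ 0 such that a = l·b; consequently a rank-1 time-synchronization attack on the pair of sites is always feasible, irrespective of the measurement values. -/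
open Matrix

/-- If `rank(F^{[S1,S2]}) = 1` and both attacked columns `a = F^{S1}z^{S1}`,
`b = F^{S2}z^{S2}` are nonzero, then `a` and `b` are colinear: a rank-1 TSA on the
pair of sites is always feasible, irrespective of the measurement values. -/
theorem stmt8 {m n : ℕ} (H : Matrix (Fin m) (Fin n) ℂ) (hH : H.rank = n)
    (S1 S2 : Finset (Fin m)) (hdisj : Disjoint S1 S2)
    (hS1 : S1.Nonempty) (hS2 : S2.Nonempty)
    (hrank : (colSub (verif H) (S1 ∪ S2)).rank = 1)
    (z : Fin m → ℂ) (a b : Fin m → ℂ)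
    (hadef : a = fun i => ∑ j ∈ S1, verif H i j * z j)
    (hbdef : b = fun i => ∑ j ∈ S2, verif H i j * z j)
    (ha : a ≠ 0) (hb : b ≠ 0) :
    ∃ l : ℂ, l ≠ 0 ∧ a = l • b := by

  classical
  set M := colSub (verif H) (S1 ∪ S2) with hM
  set W := LinearMap.range M.mulVecLin with hW
  have hfin : Module.finrank ℂ W = 1 := by
    rw [hW, ← Matrix.rank]; exact hrank
  have hmem : ∀ (S : Finset (Fin m)) (hS : S ⊆ S1 ∪ S2),
      (fun i => ∑ j ∈ S, verif H i j * z j) ∈ W := by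
    intro S hS
    refine ⟨fun j => if (j : Fin m) ∈ S then z j else 0, ?_⟩
    funext i
    show ∑ j : {j : Fin m // j ∈ S1 ∪ S2},
        M i j * (if (j : Fin m) ∈ S then z j else 0) = _
    simp only [hM, colSub, Matrix.submatrix_apply, id]
    rw [Finset.sum_coe_sort (S1 ∪ S2)
      (fun j => verif H i j * (if j ∈ S then z j else 0))]
    simp only [mul_ite, mul_zero]
    rw [Finset.sum_ite_mem, Finset.inter_eq_right.mpr hS]
  have haW : a ∈ W := hadef ▸ hmem S1 Finset.subset_union_left
  have hbW : b ∈ W := hbdef ▸ hmem S2 Finset.subset_union_right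
  have hspan : Submodule.span ℂ {b} = W := by
    apply Submodule.eq_of_le_of_finrank_eq
    · rw [Submodule.span_le, Set.singleton_subset_iff]; exact hbW
    · rw [finrank_span_singleton hb, hfin]
  have : a ∈ Submodule.span ℂ {b} := hspan ▸ haW
  obtain ⟨l, hl⟩ := Submodule.mem_span_singleton.mp this
  refine ⟨l, ?_, hl.symm⟩
  rintro rfl
  exact ha (by simpa using hl.symm)
end

section
/- Let S1, S2 ⊆ {1,…,m} be disjoint and nonempty with p := |S1| + |S2|, and suppose rank(F^{[S1,S2]}) = p (full column rank; equivalently, S1 ∪ S2 is a non-critical set of measurements). Let z ∈ ℂ^m with z^{S1} ≠ 0 and z^{S2} ≠ 0. Then there is no l ∈ ℂ with l ≠ 0 such that F^{S1}z^{S1} = l·F^{S2}z^{S2}; consequently a rank-1 time-synchronization attack on the pair of sites is never feasible. -/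
open Matrix

/-- If `F^{[S1,S2]}` has full column rank `|S1| + |S2|` and `z^{S1} ≠ 0`, `z^{S2} ≠ 0`,
then `F^{S1}z^{S1}` and `F^{S2}z^{S2}` are not colinear: a rank-1 TSA on the pair of
sites is never feasible. -/
theorem stmt9 {m n : ℕ} (H : Matrix (Fin m) (Fin n) ℂ) (hH : H.rank = n)
    (S1 S2 : Finset (Fin m)) (hdisj : Disjoint S1 S2)
    (hS1 : S1.Nonempty) (hS2 : S2.Nonempty)
    (hrank : (colSub (verif H) (S1 ∪ S2)).rank = S1.card + S2.card)
    (z : Fin m → ℂ)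
    (hz1 : (fun j : {j : Fin m // j ∈ S1} => z j.val) ≠ 0)
    (hz2 : (fun j : {j : Fin m // j ∈ S2} => z j.val) ≠ 0) :
    ¬ ∃ l : ℂ, l ≠ 0 ∧
      (fun i => ∑ j ∈ S1, verif H i j * z j) =
        l • (fun i => ∑ j ∈ S2, verif H i j * z j) := by
  rintro ⟨l, hl, heq⟩
  classical
  set F := verif H with hF
  set A := colSub F (S1 ∪ S2) with hA
  set c : {j : Fin m // j ∈ S1 ∪ S2} → ℂ :=
    fun j => if j.val ∈ S1 then z j.val else -l * z j.val with hc
  have hmul : A *ᵥ c = 0 := by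
    funext i
    have hi := congrFun heq i
    simp only [Pi.smul_apply, smul_eq_mul] at hi
    have : A *ᵥ c = fun i => ∑ j ∈ S1 ∪ S2, F i j * (if j ∈ S1 then z j else -l * z j) := by
      funext i
      rw [Matrix.mulVec]
      simp only [dotProduct]
      rw [← Finset.sum_coe_sort (S1 ∪ S2) (fun j => F i j * (if j ∈ S1 then z j else -l * z j))]
      rfl
    rw [this]
    show (∑ j ∈ S1 ∪ S2, F i j * (if j ∈ S1 then z j else -l * z j)) = 0
    rw [Finset.sum_union hdisj]
    have h1 : ∑ j ∈ S1, F i j * (if j ∈ S1 then z j else -l * z j) = ∑ j ∈ S1, F i j * z j := by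
      apply Finset.sum_congr rfl; intro j hj; rw [if_pos hj]
    have h2 : ∑ j ∈ S2, F i j * (if j ∈ S1 then z j else -l * z j)
        = -l * ∑ j ∈ S2, F i j * z j := by
      rw [Finset.mul_sum]
      apply Finset.sum_congr rfl; intro j hj
      rw [if_neg (Finset.disjoint_right.mp hdisj hj)]; ring
    rw [h1, h2, hi]
    simp
  have hcard : Fintype.card {j : Fin m // j ∈ S1 ∪ S2} = S1.card + S2.card := by
    rw [Fintype.card_coe, Finset.card_union_of_disjoint hdisj]
  have hker : LinearMap.ker A.mulVecLin = ⊥ := by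
    have h1 := A.mulVecLin.finrank_range_add_finrank_ker
    rw [← Matrix.rank, hrank, Module.finrank_pi, hcard] at h1
    have h2 : Module.finrank ℂ (LinearMap.ker A.mulVecLin) = 0 := by omega
    exact Submodule.finrank_eq_zero.mp h2
  have hc0 : c = 0 := by
    have : c ∈ LinearMap.ker A.mulVecLin := by
      rw [LinearMap.mem_ker, Matrix.mulVecLin_apply, hmul]
    rw [hker, Submodule.mem_bot] at this
    exact this
  apply hz1
  funext j
  have hj : (⟨j.val, Finset.mem_union_left S2 j.2⟩ : {j : Fin m // j ∈ S1 ∪ S2}) ∈ Set.univ := trivial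
  have := congrFun hc0 ⟨j.val, Finset.mem_union_left S2 j.2⟩
  simp only [hc, Pi.zero_apply, if_pos j.2] at this
  exact this
end

section
/- Let S ⊆ {1,…,m} be critical minimal, i.e., S is critical and every proper subset of S is non-critical. Then rank(F^S) = |S| − 1. -/
open Matrix

/-- Rank-nullity for matrices over ℂ. -/
lemma rank_nullity_matrix {α β : Type*} [Fintype α] [Fintype β] (A : Matrix α β ℂ) :
    A.rank + Module.finrank ℂ (LinearMap.ker A.mulVecLin) = Fintype.card β := by
  have h := A.mulVecLin.finrank_range_add_finrank_ker
  rwa [Module.finrank_fintype_fun_eq_card] at h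

lemma ker_eq_bot_of_full_rank {α β : Type*} [Fintype α] [Fintype β] (A : Matrix α β ℂ)
    (h : A.rank = Fintype.card β) : LinearMap.ker A.mulVecLin = ⊥ := by
  have h2 := rank_nullity_matrix A
  rw [h] at h2
  have h3 : Module.finrank ℂ (LinearMap.ker A.mulVecLin) = 0 := by omega
  exact Submodule.finrank_eq_zero.mp h3

open ComplexOrder in
lemma ker_verif {m n : ℕ} (H : Matrix (Fin m) (Fin n) ℂ) (hH : H.rank = n) :
    LinearMap.ker (verif H).mulVecLin = LinearMap.range H.mulVecLin := by
  have hHker : LinearMap.ker H.mulVecLin = ⊥ :=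
    ker_eq_bot_of_full_rank H (by simpa using hH)
  have hker2 : LinearMap.ker (Hᴴ * H).mulVecLin = ⊥ := by
    rw [LinearMap.ker_eq_bot']
    intro x hx
    rw [Matrix.mulVecLin_apply, conjTranspose_mul_self_mulVec_eq_zero] at hx
    have hm : x ∈ LinearMap.ker H.mulVecLin := by
      rw [LinearMap.mem_ker, Matrix.mulVecLin_apply]; exact hx
    rwa [hHker, Submodule.mem_bot] at hm
  have hunit : IsUnit (Hᴴ * H) := by
    rw [← Matrix.mulVec_injective_iff_isUnit, ← Matrix.coe_mulVecLin]
    exact LinearMap.ker_eq_bot.mp hker2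
  have hinv : (Hᴴ * H)⁻¹ * (Hᴴ * H) = 1 :=
    Matrix.nonsing_inv_mul _ ((Matrix.isUnit_iff_isUnit_det _).mp hunit)
  have hFH : verif H * H = 0 := by
    simp [verif, Matrix.sub_mul, Matrix.mul_assoc, hinv]
  ext x
  simp only [LinearMap.mem_ker, LinearMap.mem_range, Matrix.mulVecLin_apply]
  constructor
  · intro hx
    refine ⟨(Hᴴ * H)⁻¹ *ᵥ (Hᴴ *ᵥ x), ?_⟩
    have hrw : verif H *ᵥ x = H *ᵥ ((Hᴴ * H)⁻¹ *ᵥ (Hᴴ *ᵥ x)) - x := by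
      simp [verif, Matrix.sub_mulVec, Matrix.one_mulVec, Matrix.mulVec_mulVec,
        Matrix.mul_assoc]
    rw [hrw, sub_eq_zero] at hx
    exact hx
  · rintro ⟨y, rfl⟩
    rw [Matrix.mulVec_mulVec, hFH, Matrix.zero_mulVec]

/-- If `S` is critical minimal (critical, with every proper subset non-critical),
then `rank(F^S) = |S| - 1`. -/
theorem stmt14 {m n : ℕ} (H : Matrix (Fin m) (Fin n) ℂ) (hH : H.rank = n)
    (S : Finset (Fin m)) (hcrit : IsCritical H S)
    (hmin : ∀ T ⊂ S, ¬ IsCritical H T) :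
    (colSub (verif H) S).rank = S.card - 1 := by
  classical
  have hHker : LinearMap.ker H.mulVecLin = ⊥ :=
    ker_eq_bot_of_full_rank H (by simpa using hH)
  have hHinj : ∀ x : Fin n → ℂ, H *ᵥ x = 0 → x = 0 := by
    intro x hx
    have hm : x ∈ LinearMap.ker H.mulVecLin := by
      rw [LinearMap.mem_ker, Matrix.mulVecLin_apply]; exact hx
    rwa [hHker, Submodule.mem_bot] at hm
  -- the kernel of the rows-outside-S matrix
  set G := H.submatrix (fun i : {i : Fin m // i ∉ S} => (i : Fin m)) id with hGdef
  set K := LinearMap.ker G.mulVecLin with hKdef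
  have hKmem : ∀ x : Fin n → ℂ, x ∈ K ↔ ∀ j, j ∉ S → (H *ᵥ x) j = 0 := by
    intro x
    constructor
    · intro hx j hj
      have h0 : G *ᵥ x = 0 := hx
      exact congrFun h0 ⟨j, hj⟩
    · intro h
      show G *ᵥ x = 0
      funext j
      exact h j.1 j.2
  -- finrank K ≥ 1
  have hrnG := rank_nullity_matrix G
  rw [Fintype.card_fin, ← hKdef] at hrnG
  have hKge : 1 ≤ Module.finrank ℂ K := by
    have hlt : G.rank < n := hcrit
    omega
  -- S is nonempty
  have hSne : S.Nonempty := by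
    by_contra hS
    rw [Finset.not_nonempty_iff_eq_empty] at hS
    have hKbot : K = ⊥ := by
      rw [Submodule.eq_bot_iff]
      intro x hx
      apply hHinj
      funext j
      exact (hKmem x).mp hx j (by simp [hS])
    rw [hKbot] at hKge
    simp at hKge
  obtain ⟨i, hi⟩ := hSne
  -- finrank K ≤ 1
  have hKle : Module.finrank ℂ K ≤ 1 := by
    set φ : K →ₗ[ℂ] ℂ := (LinearMap.proj i) ∘ₗ H.mulVecLin ∘ₗ K.subtype with hφdef
    have hφinj : Function.Injective φ := by
      rw [← LinearMap.ker_eq_bot, LinearMap.ker_eq_bot']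
      intro x hx
      have hφx : (H *ᵥ (x : Fin n → ℂ)) i = 0 := hx
      have hT : S.erase i ⊂ S := Finset.erase_ssubset hi
      have hTnc := hmin (S.erase i) hT
      unfold IsCritical at hTnc
      have hGTrank :
          (H.submatrix (fun k : {k : Fin m // k ∉ S.erase i} => (k : Fin m)) id).rank = n := by
        have h1 := (H.submatrix (fun k : {k : Fin m // k ∉ S.erase i} => (k : Fin m)) id
          ).rank_le_card_width
        rw [Fintype.card_fin] at h1
        omega
      have hGTker := ker_eq_bot_of_full_rank
        (H.submatrix (fun k : {k : Fin m // k ∉ S.erase i} => (k : Fin m)) id)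
        (by simpa using hGTrank)
      have hxT : (x : Fin n → ℂ) ∈ LinearMap.ker
          (H.submatrix (fun k : {k : Fin m // k ∉ S.erase i} => (k : Fin m)) id).mulVecLin := by
        show (H.submatrix (fun k : {k : Fin m // k ∉ S.erase i} => (k : Fin m)) id)
            *ᵥ (x : Fin n → ℂ) = 0
        funext j
        have hj : (j : Fin m) ∉ S.erase i := j.2
        by_cases hji : (j : Fin m) = i
        · show (H *ᵥ (x : Fin n → ℂ)) (j : Fin m) = 0
          rw [hji]; exact hφx
        · have hjS : (j : Fin m) ∉ S := fun hjS => hj (Finset.mem_erase.mpr ⟨hji, hjS⟩)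
          exact (hKmem x).mp x.2 j hjS
      rw [hGTker, Submodule.mem_bot] at hxT
      exact Subtype.ext hxT
    calc Module.finrank ℂ K ≤ Module.finrank ℂ ℂ :=
          LinearMap.finrank_le_finrank_of_injective hφinj
      _ = 1 := Module.finrank_self ℂ
  have hK1 : Module.finrank ℂ K = 1 := le_antisymm hKle hKge
  -- extension of a vector on S by zero
  set extS : ({j : Fin m // j ∈ S} → ℂ) → (Fin m → ℂ) :=
    fun c j => if h : j ∈ S then c ⟨j, h⟩ else 0 with hextS
  have hmulv : ∀ c : {j : Fin m // j ∈ S} → ℂ,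
      (colSub (verif H) S) *ᵥ c = verif H *ᵥ extS c := by
    intro c
    funext k
    show ∑ j : {j : Fin m // j ∈ S}, verif H k (j : Fin m) * c j
        = ∑ j : Fin m, verif H k j * extS c j
    have h1 : ∑ j : Fin m, verif H k j * extS c j
        = ∑ j ∈ S, verif H k j * extS c j := by
      symm
      apply Finset.sum_subset (Finset.subset_univ S)
      intro j _ hj
      simp [hextS, dif_neg hj]
    rw [h1, ← Finset.sum_coe_sort S (fun j => verif H k j * extS c j)]
    apply Finset.sum_congr rfl
    intro j _
    simp [hextS]
  have hkerF := ker_verif H hH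
  -- the linear map from K to ker of colSub
  set e0 : (Fin n → ℂ) →ₗ[ℂ] ({j : Fin m // j ∈ S} → ℂ) :=
    (LinearMap.funLeft ℂ ℂ (fun j : {j : Fin m // j ∈ S} => (j : Fin m))) ∘ₗ H.mulVecLin
    with he0
  have hext0 : ∀ x : Fin n → ℂ, x ∈ K → extS (e0 x) = H *ᵥ x := by
    intro x hx
    funext j
    by_cases hj : j ∈ S
    · simp only [hextS, dif_pos hj]
      simp [he0]
    · simp only [hextS, dif_neg hj]
      exact ((hKmem x).mp hx j hj).symm
  have hmemL : ∀ x : K, (e0 ∘ₗ K.subtype) x ∈ LinearMap.ker (colSub (verif H) S).mulVecLin := by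
    intro x
    rw [LinearMap.mem_ker]
    show (colSub (verif H) S) *ᵥ (e0 (x : Fin n → ℂ)) = 0
    rw [hmulv, hext0 _ x.2]
    have hm : H *ᵥ (x : Fin n → ℂ) ∈ LinearMap.ker (verif H).mulVecLin := by
      rw [hkerF]
      exact ⟨(x : Fin n → ℂ), rfl⟩
    exact hm
  set e : K →ₗ[ℂ] LinearMap.ker (colSub (verif H) S).mulVecLin :=
    LinearMap.codRestrict _ (e0 ∘ₗ K.subtype) hmemL with hedef
  have hbij : Function.Bijective e := by
    constructor
    · rw [← LinearMap.ker_eq_bot, LinearMap.ker_eq_bot']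
      intro x hx
      have h0 : e0 (x : Fin n → ℂ) = 0 := congrArg Subtype.val hx
      apply Subtype.ext
      apply hHinj
      funext j
      by_cases hj : j ∈ S
      · have h2 := congrFun h0 ⟨j, hj⟩
        simpa [he0] using h2
      · exact (hKmem x).mp x.2 j hj
    · rintro ⟨c, hc⟩
      rw [LinearMap.mem_ker] at hc
      have hc' : verif H *ᵥ extS c = 0 := by
        rw [← hmulv]
        exact hc
      have hrng : extS c ∈ LinearMap.range H.mulVecLin := by
        rw [← hkerF]
        rw [LinearMap.mem_ker, Matrix.mulVecLin_apply]
        exact hc'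
      obtain ⟨x, hx⟩ := hrng
      rw [Matrix.mulVecLin_apply] at hx
      have hxK : x ∈ K := by
        rw [hKmem]
        intro j hj
        rw [hx]
        simp [hextS, dif_neg hj]
      refine ⟨⟨x, hxK⟩, ?_⟩
      apply Subtype.ext
      funext j
      show e0 x j = c j
      have h3 := congrFun hx (j : Fin m)
      simp only [hextS, dif_pos j.2, Subtype.coe_eta] at h3
      simpa [he0] using h3
  have hkerL : Module.finrank ℂ (LinearMap.ker (colSub (verif H) S).mulVecLin) = 1 := by
    rw [← hK1]
    exact (LinearEquiv.ofBijective e hbij).finrank_eq.symm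
  have hrn := rank_nullity_matrix (colSub (verif H) S)
  have hcardS : Fintype.card {j : Fin m // j ∈ S} = S.card := Fintype.card_coe S
  rw [hkerL, hcardS] at hrn
  omega
end

section
/- Let S ⊆ {1,…,m} be nonempty with rank(F^S) = |S| − 1. Then S is critical (though not necessarily critical minimal). -/
open Matrix

/-- Full column rank implies injectivity of `mulVecLin`. -/
lemma aux_inj_of_rank {κ ι : Type*} [Fintype κ] [Fintype ι] (M : Matrix κ ι ℂ)
    (h : M.rank = Fintype.card ι) : Function.Injective M.mulVecLin := by
  rw [← LinearMap.ker_eq_bot]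
  have hrn := LinearMap.finrank_range_add_finrank_ker M.mulVecLin
  rw [show Module.finrank ℂ (LinearMap.range M.mulVecLin) = M.rank from rfl, h] at hrn
  have hcard : Module.finrank ℂ (ι → ℂ) = Fintype.card ι := Module.finrank_pi ℂ
  rw [hcard] at hrn
  have : Module.finrank ℂ (LinearMap.ker M.mulVecLin) = 0 := by omega
  exact Submodule.finrank_eq_zero.mp this

/-- Injectivity of `mulVecLin` gives full column rank. -/
lemma aux_rank_of_inj {κ ι : Type*} [Fintype κ] [Fintype ι] (M : Matrix κ ι ℂ)
    (h : Function.Injective M.mulVecLin) : M.rank = Fintype.card ι := by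
  rw [Matrix.rank, LinearMap.finrank_range_of_inj h, Module.finrank_pi]

/-- If `S` is nonempty and `rank(F^S) = |S| - 1`, then `S` is critical. -/
theorem stmt15 {m n : ℕ} (H : Matrix (Fin m) (Fin n) ℂ) (hH : H.rank = n)
    (S : Finset (Fin m)) (hS : S.Nonempty)
    (hrank : (colSub (verif H) S).rank = S.card - 1) :
    IsCritical H S := by
  by_contra hcrit
  -- the deleted matrix has full column rank
  set Hd := H.submatrix (fun i : {i : Fin m // i ∉ S} => (i : Fin m)) id with hHd
  have hHdrank : Hd.rank = n := by
    have h1 : Hd.rank ≤ n := by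
      simpa using Hd.rank_le_card_width
    have h2 : ¬ Hd.rank < n := hcrit
    omega
  have hHdinj : Function.Injective Hd.mulVecLin := by
    apply aux_inj_of_rank
    simpa using hHdrank
  -- show columns of F^S are independent
  have hinj : Function.Injective (colSub (verif H) S).mulVecLin := by
    rw [← LinearMap.ker_eq_bot, eq_bot_iff]
    intro c hc
    simp only [LinearMap.mem_ker, mulVecLin_apply] at hc
    -- extend c by zero
    classical
    set x : Fin m → ℂ := fun i => if h : i ∈ S then c ⟨i, h⟩ else 0 with hx
    have hFx : (verif H).mulVec x = 0 := by
      funext i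
      have : (verif H).mulVec x i = (colSub (verif H) S).mulVec c i := by
        simp only [mulVec, dotProduct, colSub, submatrix_apply, id_eq]
        calc ∑ j : Fin m, verif H i j * x j
            = ∑ j ∈ S, verif H i j * x j := by
              refine (Finset.sum_subset (Finset.subset_univ S) ?_).symm
              intro j _ hj
              simp [hx, hj]
          _ = ∑ j : {j // j ∈ S}, verif H i (j : Fin m) * x (j : Fin m) :=
              Finset.sum_subtype S (fun j => Iff.rfl) _
          _ = ∑ j : {j // j ∈ S}, verif H i (j : Fin m) * c j := by
              apply Finset.sum_congr rfl
              intro j _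
              simp [hx, j.2]
      rw [this, hc]
    -- P x = x
    have hPx : (H * ((Hᴴ * H)⁻¹ * Hᴴ)).mulVec x = x := by
      have h1 : (H * (Hᴴ * H)⁻¹ * Hᴴ).mulVec x - x = 0 := by
        have h2 : (verif H).mulVec x = (H * (Hᴴ * H)⁻¹ * Hᴴ).mulVec x - x := by
          rw [verif, Matrix.sub_mulVec, Matrix.one_mulVec]
        rw [← h2, hFx]
      rw [← Matrix.mul_assoc]
      exact sub_eq_zero.mp h1
    set y : Fin n → ℂ := ((Hᴴ * H)⁻¹ * Hᴴ).mulVec x with hy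
    have hxy : H.mulVec y = x := by
      rw [hy, Matrix.mulVec_mulVec]
      exact hPx
    have hHdy : Hd.mulVec y = 0 := by
      funext i
      have : Hd.mulVec y i = H.mulVec y i.1 := by
        simp [hHd, mulVec, dotProduct, submatrix_apply]
      rw [this, hxy, hx]
      simp [i.2]
    have hy0 : y = 0 := by
      have := hHdinj (a₁ := y) (a₂ := 0) ?_
      · exact this
      · simp [mulVecLin_apply, hHdy]
    have hx0 : x = 0 := by rw [← hxy, hy0, Matrix.mulVec_zero]
    have : c = 0 := by
      funext j
      have := congrFun hx0 j.1
      simpa [hx, j.2] using this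
    simp [this]
  have hfull : (colSub (verif H) S).rank = S.card := by
    rw [aux_rank_of_inj _ hinj, Fintype.card_coe]
  have hcard : 1 ≤ S.card := Finset.card_pos.mpr hS
  omega
end

section
/- Let a, b ∈ ℂ^m both be nonzero, and let W := [a b]†[a b] be the 2×2 Hermitian positive-semidefinite Gram matrix with eigenvalues λ1 ≥ λ2 ≥ 0. Then 1 ≥ λ1/(λ1 + λ2) ≥ 1/2 + |a†b| / (2·‖a‖·‖b‖). Equivalently, for real numbers f11, f22 > 0 and D ≥ 0 with D² ≤ f11·f22, writing S = f11 + f22 and P = f11·f22: 1 ≥ 1/2 + (1/2)·√((S² − 4P + 4D²)/S²) ≥ 1/2 + D/(2·√P). -/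
/-!
The eigenvalues `λ₁ ≥ λ₂` of the Gram matrix are the roots of `t² - S t + (P - D²)`, where
`S = ‖a‖² + ‖b‖²` is its trace and `P - D² = ‖a‖²‖b‖² - |a†b|²` its determinant, which is
nonnegative because the matrix is positive semidefinite (this is Cauchy–Schwarz). So
`λ₁ - λ₂` is the square root of the discriminant `S² - 4P + 4D²`, and
`λ₁/(λ₁+λ₂) = 1/2 + (1/2)√((S² - 4P + 4D²)/S²)` reduces the matrix claims to the scalar ones.
Of these, the upper bound is `D² ≤ P`, and after squaring the lower bound becomes
`(P - D²)(f₁₁ - f₂₂)² ≥ 0`.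
-/

open Matrix
open scoped ComplexOrder

theorem half_add_half_sqrt_discrim_le_one {f₁ f₂ D : ℝ} (hD : D ^ 2 ≤ f₁ * f₂) :
    1 / 2 + 1 / 2 * √(((f₁ + f₂) ^ 2 - 4 * (f₁ * f₂) + 4 * D ^ 2) / (f₁ + f₂) ^ 2) ≤ 1 := by
  have : √(((f₁ + f₂) ^ 2 - 4 * (f₁ * f₂) + 4 * D ^ 2) / (f₁ + f₂) ^ 2) ≤ 1 :=
    Real.sqrt_le_one.2 <| div_le_one_of_le₀ (by linarith) (sq_nonneg _)
  linarith

theorem half_add_div_le_half_add_half_sqrt_discrim {f₁ f₂ D : ℝ} (h₁ : 0 < f₁) (h₂ : 0 < f₂)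
    (hD : D ^ 2 ≤ f₁ * f₂) :
    1 / 2 + D / (2 * √(f₁ * f₂)) ≤
      1 / 2 + 1 / 2 * √(((f₁ + f₂) ^ 2 - 4 * (f₁ * f₂) + 4 * D ^ 2) / (f₁ + f₂) ^ 2) := by
  have hP : 0 < f₁ * f₂ := mul_pos h₁ h₂
  have : D / √(f₁ * f₂) ≤ √(((f₁ + f₂) ^ 2 - 4 * (f₁ * f₂) + 4 * D ^ 2) / (f₁ + f₂) ^ 2) := by
    apply Real.le_sqrt_of_sq_le
    rw [div_pow, Real.sq_sqrt hP.le, div_le_div_iff₀ hP (by positivity)]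
    nlinarith [mul_nonneg (sub_nonneg.2 hD) (sq_nonneg (f₁ - f₂))]
  rw [mul_comm 2, ← div_div]
  linarith

theorem div_add_eq_half_add_half_sqrt_discrim {x y f₁ f₂ D : ℝ} (hyx : y ≤ x) (hxy : 0 < x + y)
    (hsum : x + y = f₁ + f₂) (hprod : x * y = f₁ * f₂ - D ^ 2) :
    x / (x + y) =
      1 / 2 + 1 / 2 * √(((f₁ + f₂) ^ 2 - 4 * (f₁ * f₂) + 4 * D ^ 2) / (f₁ + f₂) ^ 2) := by
  have hdiscrim : ((f₁ + f₂) ^ 2 - 4 * (f₁ * f₂) + 4 * D ^ 2) / (f₁ + f₂) ^ 2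
      = ((x - y) / (x + y)) ^ 2 := by
    rw [div_pow, ← hsum]
    congr 1
    linear_combination 4 * hprod
  rw [hdiscrim, Real.sqrt_sq (div_nonneg (by linarith) hxy.le)]
  field_simp
  ring

lemma sum_norm_sq_pos {ι E : Type*} [Fintype ι] [NormedAddCommGroup E] {a : ι → E} (ha : a ≠ 0) :
    0 < ∑ i, ‖a i‖ ^ 2 := by
  obtain ⟨i, hi⟩ := Function.ne_iff.mp ha
  exact Finset.sum_pos' (fun j _ => by positivity)
    ⟨i, Finset.mem_univ i, pow_pos (norm_pos_iff.2 hi) 2⟩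

namespace Matrix.IsHermitian

variable {𝕜 : Type*} [RCLike 𝕜] {A : Matrix (Fin 2) (Fin 2) 𝕜} (hA : A.IsHermitian)

lemma trace_eq_max_add_min_eigenvalues :
    A.trace = (max (hA.eigenvalues 0) (hA.eigenvalues 1) +
      min (hA.eigenvalues 0) (hA.eigenvalues 1) : ℝ) := by
  rw [max_add_min, hA.trace_eq_sum_eigenvalues, Fin.sum_univ_two]
  push_cast
  rfl

lemma det_eq_max_mul_min_eigenvalues :
    A.det = (max (hA.eigenvalues 0) (hA.eigenvalues 1) *
      min (hA.eigenvalues 0) (hA.eigenvalues 1) : ℝ) := by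
  rw [max_mul_min, hA.det_eq_prod_eigenvalues, Fin.prod_univ_two]
  push_cast
  rfl

end Matrix.IsHermitian

section Gram

variable {m : ℕ} (a b : Fin m → ℂ)

lemma conjTranspose_mul_self_of_cols_fin_two :
    (of fun i j => ![a i, b i] j)ᴴ * (of fun i j => ![a i, b i] j) =
      !![((∑ i, ‖a i‖ ^ 2 : ℝ) : ℂ), ∑ i, starRingEnd ℂ (a i) * b i;
        starRingEnd ℂ (∑ i, starRingEnd ℂ (a i) * b i), ((∑ i, ‖b i‖ ^ 2 : ℝ) : ℂ)] := by
  ext j k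
  fin_cases j <;> fin_cases k <;> simp [mul_apply, Complex.mul_conj', mul_comm]

lemma trace_conjTranspose_mul_self_of_cols_fin_two :
    ((of fun i j => ![a i, b i] j)ᴴ * (of fun i j => ![a i, b i] j)).trace =
      ((∑ i, ‖a i‖ ^ 2 + ∑ i, ‖b i‖ ^ 2 : ℝ) : ℂ) := by
  rw [conjTranspose_mul_self_of_cols_fin_two, trace_fin_two_of]
  push_cast
  rfl

lemma det_conjTranspose_mul_self_of_cols_fin_two :
    ((of fun i j => ![a i, b i] j)ᴴ * (of fun i j => ![a i, b i] j)).det =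
      ((∑ i, ‖a i‖ ^ 2) * (∑ i, ‖b i‖ ^ 2) - ‖∑ i, starRingEnd ℂ (a i) * b i‖ ^ 2 : ℝ) := by
  rw [conjTranspose_mul_self_of_cols_fin_two, det_fin_two_of, Complex.mul_conj']
  push_cast
  rfl

theorem sq_norm_sum_conj_mul_le :
    ‖∑ i, starRingEnd ℂ (a i) * b i‖ ^ 2 ≤ (∑ i, ‖a i‖ ^ 2) * (∑ i, ‖b i‖ ^ 2) := by
  have := (posSemidef_conjTranspose_mul_self (of fun i j => ![a i, b i] j)).det_nonneg
  rw [det_conjTranspose_mul_self_of_cols_fin_two, Complex.zero_le_real] at this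
  linarith

end Gram

theorem stmt17_general {m : ℕ} (a b : Fin m → ℂ) (ha : a ≠ 0) (hb : b ≠ 0)
    (M : Matrix (Fin m) (Fin 2) ℂ) (hM : M = Matrix.of fun i j => ![a i, b i] j)
    (W : Matrix (Fin 2) (Fin 2) ℂ) (hW : W = Mᴴ * M)
    (hHerm : W.IsHermitian)
    (lam1 lam2 : ℝ)
    (hlam1 : lam1 = max (hHerm.eigenvalues 0) (hHerm.eigenvalues 1))
    (hlam2 : lam2 = min (hHerm.eigenvalues 0) (hHerm.eigenvalues 1))
    (f11 f22 D : ℝ) (hf11 : 0 < f11) (hf22 : 0 < f22)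
    (hCS : D ^ 2 ≤ f11 * f22) :
    (1 ≥ lam1 / (lam1 + lam2) ∧
      lam1 / (lam1 + lam2) ≥
        1 / 2 + ‖∑ i, (starRingEnd ℂ) (a i) * b i‖ /
          (2 * Real.sqrt (∑ i, ‖a i‖ ^ 2) *
            Real.sqrt (∑ i, ‖b i‖ ^ 2))) ∧
    (1 ≥ 1 / 2 + (1 / 2) *
        Real.sqrt (((f11 + f22) ^ 2 - 4 * (f11 * f22) + 4 * D ^ 2) / (f11 + f22) ^ 2) ∧
      1 / 2 + (1 / 2) *
          Real.sqrt (((f11 + f22) ^ 2 - 4 * (f11 * f22) + 4 * D ^ 2) / (f11 + f22) ^ 2) ≥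
        1 / 2 + D / (2 * Real.sqrt (f11 * f22))) := by
  subst hM hW
  have hA := sum_norm_sq_pos ha
  have hB := sum_norm_sq_pos hb
  have hsum : lam1 + lam2 = ∑ i, ‖a i‖ ^ 2 + ∑ i, ‖b i‖ ^ 2 := by
    have := hHerm.trace_eq_max_add_min_eigenvalues
    rw [trace_conjTranspose_mul_self_of_cols_fin_two] at this
    rw [hlam1, hlam2]
    exact (RCLike.ofReal_inj (K := ℂ)).1 this.symm
  have hprod : lam1 * lam2 = (∑ i, ‖a i‖ ^ 2) * (∑ i, ‖b i‖ ^ 2) -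
      ‖∑ i, starRingEnd ℂ (a i) * b i‖ ^ 2 := by
    have := hHerm.det_eq_max_mul_min_eigenvalues
    rw [det_conjTranspose_mul_self_of_cols_fin_two] at this
    rw [hlam1, hlam2]
    exact (RCLike.ofReal_inj (K := ℂ)).1 this.symm
  have hratio := div_add_eq_half_add_half_sqrt_discrim (hlam1 ▸ hlam2 ▸ min_le_max)
    (by linarith) hsum hprod
  have hCSab := sq_norm_sum_conj_mul_le a b
  refine ⟨⟨?_, ?_⟩, half_add_half_sqrt_discrim_le_one hCS,
    half_add_div_le_half_add_half_sqrt_discrim hf11 hf22 hCS⟩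
  · exact hratio ▸ half_add_half_sqrt_discrim_le_one hCSab
  · rw [hratio, mul_assoc, ← Real.sqrt_mul hA.le]
    exact half_add_div_le_half_add_half_sqrt_discrim hA hB hCSab

/-- For nonzero `a, b ∈ ℂ^m` with Gram matrix `W = [a b]†[a b]` of eigenvalues
`λ1 ≥ λ2 ≥ 0`: `1 ≥ λ1/(λ1+λ2) ≥ 1/2 + |a†b|/(2‖a‖‖b‖)` (ERR ≥ IoS*); equivalently,
for reals `f11, f22 > 0`, `D ≥ 0` with `D² ≤ f11·f22`, writing `S = f11 + f22` and
`P = f11·f22`: `1 ≥ 1/2 + (1/2)√((S²−4P+4D²)/S²) ≥ 1/2 + D/(2√P)`. -/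
theorem stmt17 {m : ℕ} (a b : Fin m → ℂ) (ha : a ≠ 0) (hb : b ≠ 0)
    (M : Matrix (Fin m) (Fin 2) ℂ) (hM : M = Matrix.of fun i j => ![a i, b i] j)
    (W : Matrix (Fin 2) (Fin 2) ℂ) (hW : W = Mᴴ * M)
    (hHerm : W.IsHermitian)
    (lam1 lam2 : ℝ)
    (hlam1 : lam1 = max (hHerm.eigenvalues 0) (hHerm.eigenvalues 1))
    (hlam2 : lam2 = min (hHerm.eigenvalues 0) (hHerm.eigenvalues 1))
    (f11 f22 D : ℝ) (hf11 : 0 < f11) (hf22 : 0 < f22) (hD0 : 0 ≤ D)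
    (hCS : D ^ 2 ≤ f11 * f22) :
    (1 ≥ lam1 / (lam1 + lam2) ∧
      lam1 / (lam1 + lam2) ≥
        1 / 2 + ‖∑ i, (starRingEnd ℂ) (a i) * b i‖ /
          (2 * Real.sqrt (∑ i, ‖a i‖ ^ 2) *
            Real.sqrt (∑ i, ‖b i‖ ^ 2))) ∧
    (1 ≥ 1 / 2 + (1 / 2) *
        Real.sqrt (((f11 + f22) ^ 2 - 4 * (f11 * f22) + 4 * D ^ 2) / (f11 + f22) ^ 2) ∧
      1 / 2 + (1 / 2) *
          Real.sqrt (((f11 + f22) ^ 2 - 4 * (f11 * f22) + 4 * D ^ 2) / (f11 + f22) ^ 2) ≥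
        1 / 2 + D / (2 * Real.sqrt (f11 * f22))) :=
  stmt17_general a b ha hb M hM W hW hHerm lam1 lam2 hlam1 hlam2 f11 f22 D hf11 hf22 hCS
end
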